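/- arXiv:1406.2462 — 3 statements merged into one kernel-verified Lean document; each statement's English description precedes it below -/
import Mathlib

section
/- Let f be a non-negative measurable function on 𝒳 and X an 𝒳-valued random variable with m_f = E f(X) and Var(f(X)) ≤ v. Then for every α > 0 and every μ ∈ ℝ, B_f^-(μ,0) ≤ r̄_f(μ) ≤ B_f^+(μ,0), where B_f^+(μ,ε) = (m_f − μ) + (α/2)(m_f − μ)² + (α/2)v + ε and B_f^-(μ,ε) = (m_f − μ) − (α/2)(m_f − μ)² − (α/2)v − ε. -/
open MeasureTheory ProbabilityTheory Real

noncomputable section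

/-- Catoni's truncation function `φ`. -/
def catoniPhi (x : ℝ) : ℝ :=
  if x < 0 then -Real.log (1 - x + x ^ 2 / 2) else Real.log (1 + x + x ^ 2 / 2)

/-- Catoni's empirical criterion `r̂_f(μ)` based on the sample `Xs`. -/
def rhat {Ω 𝒳 : Type*} (n : ℕ) (α : ℝ) (Xs : Fin n → Ω → 𝒳)
    (f : 𝒳 → ℝ) (μ : ℝ) (ω : Ω) : ℝ :=
  (1 / (n * α)) * ∑ l, catoniPhi (α * (f (Xs l ω) - μ))

/-- The deterministic counterpart `r̄_f(μ)` of Catoni's criterion. -/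
def rbar {Ω 𝒳 : Type*} [MeasurableSpace Ω] (P : Measure Ω)
    (α : ℝ) (X : Ω → 𝒳) (f : 𝒳 → ℝ) (μ : ℝ) : ℝ :=
  (1 / α) * ∫ ω, catoniPhi (α * (f (X ω) - μ)) ∂P

/-!
Catoni's function is squeezed pointwise between the quadratics `x - x² / 2` and `x + x² / 2`:
the upper bound is `log y ≤ y - 1`, and the lower bound follows from it because
`(1 + x + x² / 2) (1 - x + x² / 2) = 1 + x⁴ / 4 ≥ 1`. Integrating these bounds at `x = α (f(X) - μ)`
and writing the second moment of `f(X) - μ` as `Var f(X) + (m_f - μ)²` gives the claim.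
-/

lemma one_add_add_sq_div_two_pos (x : ℝ) : 0 < 1 + x + x ^ 2 / 2 := by
  nlinarith [sq_nonneg (x + 1)]

lemma log_one_add_add_sq_div_two_le (x : ℝ) : log (1 + x + x ^ 2 / 2) ≤ x + x ^ 2 / 2 := by
  linarith [log_le_sub_one_of_pos (one_add_add_sq_div_two_pos x)]

lemma sub_sq_div_two_le_log_one_add_add_sq_div_two (x : ℝ) :
    x - x ^ 2 / 2 ≤ log (1 + x + x ^ 2 / 2) := by
  have hprod : 0 ≤ log ((1 + x + x ^ 2 / 2) * (1 + -x + (-x) ^ 2 / 2)) :=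
    log_nonneg (by nlinarith [sq_nonneg (x ^ 2)])
  rw [log_mul (one_add_add_sq_div_two_pos x).ne' (one_add_add_sq_div_two_pos (-x)).ne'] at hprod
  linarith [log_one_add_add_sq_div_two_le (-x)]

lemma catoniPhi_le (x : ℝ) : catoniPhi x ≤ x + x ^ 2 / 2 := by
  unfold catoniPhi
  split_ifs
  · rw [show 1 - x + x ^ 2 / 2 = 1 + -x + (-x) ^ 2 / 2 by ring]
    linarith [sub_sq_div_two_le_log_one_add_add_sq_div_two (-x)]
  · exact log_one_add_add_sq_div_two_le x

lemma sub_le_catoniPhi (x : ℝ) : x - x ^ 2 / 2 ≤ catoniPhi x := by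
  unfold catoniPhi
  split_ifs
  · rw [show 1 - x + x ^ 2 / 2 = 1 + -x + (-x) ^ 2 / 2 by ring]
    linarith [log_one_add_add_sq_div_two_le (-x)]
  · exact sub_sq_div_two_le_log_one_add_add_sq_div_two x

lemma abs_catoniPhi_le (x : ℝ) : |catoniPhi x| ≤ |x| + x ^ 2 / 2 := by
  rw [abs_le]
  constructor
  · linarith [sub_le_catoniPhi x, neg_abs_le x]
  · linarith [catoniPhi_le x, le_abs_self x]

lemma measurable_catoniPhi : Measurable catoniPhi :=
  Measurable.ite (measurableSet_lt measurable_id measurable_const)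
    (measurable_log.comp (by fun_prop)).neg (measurable_log.comp (by fun_prop))

section Integral

variable {Ω : Type*} [MeasurableSpace Ω] {P : Measure Ω} [IsFiniteMeasure P] {Y : Ω → ℝ}

lemma MeasureTheory.MemLp.integrable_catoniPhi_const_mul (hY : MemLp Y 2 P) (α : ℝ) :
    Integrable (fun ω => catoniPhi (α * Y ω)) P := by
  refine Integrable.mono'
    (((hY.integrable one_le_two).const_mul α).abs.add ((hY.const_mul α).integrable_sq.div_const 2))
    (measurable_catoniPhi.comp_aemeasurable
      (hY.aestronglyMeasurable.aemeasurable.const_mul α)).aestronglyMeasurable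
    (Filter.Eventually.of_forall fun ω => ?_)
  simpa only [Real.norm_eq_abs, Pi.add_apply] using abs_catoniPhi_le (α * Y ω)

lemma integral_catoniPhi_const_mul_le (hY : MemLp Y 2 P) (α : ℝ) :
    ∫ ω, catoniPhi (α * Y ω) ∂P ≤ α * ∫ ω, Y ω ∂P + α ^ 2 / 2 * ∫ ω, Y ω ^ 2 ∂P := by
  have hY1 := (hY.integrable one_le_two).const_mul α
  have hY2 := hY.integrable_sq.const_mul (α ^ 2 / 2)
  rw [← integral_const_mul, ← integral_const_mul, ← integral_add hY1 hY2]
  exact integral_mono (hY.integrable_catoniPhi_const_mul α) (hY1.add hY2)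
    fun ω => (catoniPhi_le _).trans_eq (by ring)

lemma le_integral_catoniPhi_const_mul (hY : MemLp Y 2 P) (α : ℝ) :
    α * ∫ ω, Y ω ∂P - α ^ 2 / 2 * ∫ ω, Y ω ^ 2 ∂P ≤ ∫ ω, catoniPhi (α * Y ω) ∂P := by
  have hY1 := (hY.integrable one_le_two).const_mul α
  have hY2 := hY.integrable_sq.const_mul (α ^ 2 / 2)
  rw [← integral_const_mul, ← integral_const_mul, ← integral_sub hY1 hY2]
  exact integral_mono (hY1.sub hY2) (hY.integrable_catoniPhi_const_mul α)
    fun ω => (sub_le_catoniPhi _).trans_eq' (by ring)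

end Integral

lemma integral_sq_eq_variance_add_sq {Ω : Type*} [MeasurableSpace Ω] {P : Measure Ω}
    [IsProbabilityMeasure P] {Y : Ω → ℝ} (hY : MemLp Y 2 P) :
    ∫ ω, Y ω ^ 2 ∂P = variance Y P + (∫ ω, Y ω ∂P) ^ 2 := by
  rw [variance_eq_sub hY]
  simp

theorem stmt_2_general {Ω 𝒳 : Type*} [MeasurableSpace Ω] [MeasurableSpace 𝒳]
    (P : Measure Ω) [IsProbabilityMeasure P]
    (X : Ω → 𝒳)
    (f : 𝒳 → ℝ)
    (hfL2 : MemLp (fun ω => f (X ω)) 2 P)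
    (v : ℝ) (hv : variance (fun ω => f (X ω)) P ≤ v)
    (α : ℝ) (hα : 0 < α) (μ : ℝ) :
    ((∫ ω, f (X ω) ∂P) - μ) - α / 2 * ((∫ ω, f (X ω) ∂P) - μ) ^ 2 - α / 2 * v ≤
        rbar P α X f μ ∧
      rbar P α X f μ ≤
        ((∫ ω, f (X ω) ∂P) - μ) + α / 2 * ((∫ ω, f (X ω) ∂P) - μ) ^ 2 + α / 2 * v := by
  set m := ∫ ω, f (X ω) ∂P
  have hY : MemLp (fun ω => f (X ω) - μ) 2 P := hfL2.sub (memLp_const μ)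
  have hmean : ∫ ω, (f (X ω) - μ) ∂P = m - μ := by
    simp [integral_sub (hfL2.integrable one_le_two) (integrable_const μ), m]
  have hsecond : ∫ ω, (f (X ω) - μ) ^ 2 ∂P ≤ v + (m - μ) ^ 2 := by
    rw [integral_sq_eq_variance_add_sq hY, variance_sub_const hfL2.aestronglyMeasurable, hmean]
    linarith
  have hupper := integral_catoniPhi_const_mul_le hY α
  have hlower := le_integral_catoniPhi_const_mul hY α
  rw [hmean] at hupper hlower
  have hscaled := mul_le_mul_of_nonneg_left hsecond (by positivity : (0 : ℝ) ≤ α ^ 2 / 2)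
  rw [rbar, one_div_mul_eq_div, le_div_iff₀ hα, div_le_iff₀ hα]
  constructor <;> linarith

/-- Lemma 3.1 (first part): the deterministic criterion `r̄_f(μ)` is squeezed between the
quadratic polynomials `B_f^-(μ,0)` and `B_f^+(μ,0)`. -/
theorem stmt_2 {Ω 𝒳 : Type*} [MeasurableSpace Ω] [MeasurableSpace 𝒳]
    (P : Measure Ω) [IsProbabilityMeasure P]
    (X : Ω → 𝒳) (hX : Measurable X)
    (f : 𝒳 → ℝ) (hfm : Measurable f) (hf0 : ∀ x, 0 ≤ f x)
    (hfL2 : MemLp (fun ω => f (X ω)) 2 P)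
    (v : ℝ) (hv : variance (fun ω => f (X ω)) P ≤ v)
    (α : ℝ) (hα : 0 < α) (μ : ℝ) :
    ((∫ ω, f (X ω) ∂P) - μ) - α / 2 * ((∫ ω, f (X ω) ∂P) - μ) ^ 2 - α / 2 * v ≤
        rbar P α X f μ ∧
      rbar P α X f μ ≤
        ((∫ ω, f (X ω) ∂P) - μ) + α / 2 * ((∫ ω, f (X ω) ∂P) - μ) ^ 2 + α / 2 * v :=
  stmt_2_general P X f hfL2 v hv α hα μ
end
end

section
/- Let f be a non-negative measurable function on 𝒳 and X an 𝒳-valued random variable with m_f = E f(X) and Var(f(X)) ≤ v. Let α > 0 satisfy α²v ≤ 1 and let μ̄_f be the unique zero of the non-increasing function μ ↦ r̄_f(μ). Then m_f − αv ≤ μ̄_f ≤ m_f + αv. -/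
open MeasureTheory ProbabilityTheory Real

noncomputable section

/-!
Catoni's truncation is squeezed between the quadratics `x - x²/2` and `x + x²/2`, so at any
`μ` the criterion `r̄_f(μ)` is within `α (Var f(X) + (m_f - μ)²) / 2` of `m_f - μ`. At
`μ = m_f ± α v` the condition `α² v ≤ 1` makes this error at most `α v`, so `r̄_f` is `≥ 0` at
`m_f - α v` and `≤ 0` at `m_f + α v`; as `r̄_f` is non-increasing, its unique zero lies between.
-/

lemma one_sub_add_sq_div_two_pos (x : ℝ) : 0 < 1 - x + x ^ 2 / 2 := by
  nlinarith [sq_nonneg (x - 1)]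

/-- The two branches of `φ` are ordered since
`(1 - x + x²/2)(1 + x + x²/2) = 1 + x⁴/4 ≥ 1`. -/
lemma neg_log_one_sub_le_log_one_add (x : ℝ) :
    -log (1 - x + x ^ 2 / 2) ≤ log (1 + x + x ^ 2 / 2) := by
  rw [neg_le_iff_add_nonneg, ← log_mul (one_add_add_sq_div_two_pos x).ne'
    (one_sub_add_sq_div_two_pos x).ne']
  exact log_nonneg (by nlinarith [sq_nonneg (x ^ 2)])

lemma catoniPhi_monotone : Monotone catoniPhi := by
  intro a b hab
  unfold catoniPhi
  split_ifs with ha hb hb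
  · exact neg_le_neg (log_le_log (one_sub_add_sq_div_two_pos b) (by nlinarith))
  · have h1 : 0 ≤ log (1 - a + a ^ 2 / 2) := log_nonneg (by nlinarith)
    have h2 : 0 ≤ log (1 + b + b ^ 2 / 2) := log_nonneg (by nlinarith)
    linarith
  · linarith
  · exact log_le_log (one_add_add_sq_div_two_pos a) (by nlinarith)

section Integrals

variable {Ω : Type*} [MeasurableSpace Ω] {P : Measure Ω} {Z : Ω → ℝ}

lemma integrable_catoniPhi [IsFiniteMeasure P] (hZ : MemLp Z 2 P) :
    Integrable (fun ω => catoniPhi (Z ω)) P :=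
  ((hZ.integrable one_le_two).abs.add (hZ.integrable_sq.div_const 2)).mono'
    (measurable_catoniPhi.comp_aemeasurable hZ.aemeasurable).aestronglyMeasurable
    (ae_of_all _ fun ω => abs_catoniPhi_le (Z ω))

lemma integral_sq_eq_variance_add [IsProbabilityMeasure P] (hZ : MemLp Z 2 P) :
    ∫ ω, Z ω ^ 2 ∂P = Var[Z; P] + P[Z] ^ 2 := by
  rw [variance_eq_sub hZ]
  simp only [Pi.pow_apply, sub_add_cancel]

lemma integral_catoniPhi_le [IsProbabilityMeasure P] (hZ : MemLp Z 2 P) :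
    ∫ ω, catoniPhi (Z ω) ∂P ≤ P[Z] + (Var[Z; P] + P[Z] ^ 2) / 2 := by
  have hZ1 := hZ.integrable one_le_two
  calc ∫ ω, catoniPhi (Z ω) ∂P
      ≤ ∫ ω, (Z ω + Z ω ^ 2 / 2) ∂P :=
        integral_mono (integrable_catoniPhi hZ) (hZ1.add (hZ.integrable_sq.div_const 2))
          fun ω => catoniPhi_le (Z ω)
    _ = P[Z] + (Var[Z; P] + P[Z] ^ 2) / 2 := by
        rw [integral_add hZ1 (hZ.integrable_sq.div_const 2), integral_div,
          integral_sq_eq_variance_add hZ]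

lemma sub_le_integral_catoniPhi [IsProbabilityMeasure P] (hZ : MemLp Z 2 P) :
    P[Z] - (Var[Z; P] + P[Z] ^ 2) / 2 ≤ ∫ ω, catoniPhi (Z ω) ∂P := by
  have hZ1 := hZ.integrable one_le_two
  calc P[Z] - (Var[Z; P] + P[Z] ^ 2) / 2
      = ∫ ω, (Z ω - Z ω ^ 2 / 2) ∂P := by
        rw [integral_sub hZ1 (hZ.integrable_sq.div_const 2), integral_div,
          integral_sq_eq_variance_add hZ]
    _ ≤ ∫ ω, catoniPhi (Z ω) ∂P :=
        integral_mono (hZ1.sub (hZ.integrable_sq.div_const 2)) (integrable_catoniPhi hZ)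
          fun ω => sub_le_catoniPhi (Z ω)

end Integrals

section Criterion

variable {Ω 𝒳 : Type*} [MeasurableSpace Ω] {P : Measure Ω} {X : Ω → 𝒳} {f : 𝒳 → ℝ} {α : ℝ}

lemma rbar_antitone [IsFiniteMeasure P] (hY : MemLp (fun ω => f (X ω)) 2 P) (hα : 0 < α) :
    Antitone (rbar P α X f) := by
  intro μ₁ μ₂ hμ
  have hZ : ∀ μ : ℝ, MemLp (fun ω => α * (f (X ω) - μ)) 2 P :=
    fun μ => (hY.sub (memLp_const μ)).const_mul α
  refine mul_le_mul_of_nonneg_left ?_ (by positivity)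
  exact integral_mono (integrable_catoniPhi (hZ μ₂)) (integrable_catoniPhi (hZ μ₁))
    fun ω => catoniPhi_monotone (by nlinarith)

lemma abs_rbar_sub_le [IsProbabilityMeasure P] (hY : MemLp (fun ω => f (X ω)) 2 P)
    (hα : 0 < α) (μ : ℝ) :
    |rbar P α X f μ - (P[fun ω => f (X ω)] - μ)|
      ≤ α * (Var[fun ω => f (X ω); P] + (P[fun ω => f (X ω)] - μ) ^ 2) / 2 := by
  have hZ : MemLp (fun ω => α * (f (X ω) - μ)) 2 P := (hY.sub (memLp_const μ)).const_mul α
  have hmean : P[fun ω => α * (f (X ω) - μ)] = α * (P[fun ω => f (X ω)] - μ) := by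
    rw [integral_const_mul, integral_sub (hY.integrable one_le_two) (integrable_const μ),
      integral_const, probReal_univ, one_smul]
  have hvar : Var[fun ω => α * (f (X ω) - μ); P] = α ^ 2 * Var[fun ω => f (X ω); P] := by
    rw [variance_const_mul, variance_sub_const hY.aestronglyMeasurable]
  have hupper := integral_catoniPhi_le hZ
  have hlower := sub_le_integral_catoniPhi hZ
  rw [hmean, hvar] at hupper hlower
  unfold rbar
  rw [abs_le, one_div]
  constructor
  · rw [le_sub_iff_add_le, le_inv_mul_iff₀ hα]
    nlinarith
  · rw [sub_le_iff_le_add, inv_mul_le_iff₀ hα]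
    nlinarith

end Criterion

lemma le_of_antitone_of_unique_zero {ι : Type*} [LinearOrder ι] {g : ι → ℝ} (hg : Antitone g)
    {a c : ι} (ha : 0 ≤ g a) (hc : g c = 0) (huniq : ∀ x, g x = 0 → x = c) : a ≤ c := by
  by_contra! h
  exact h.ne' (huniq a (le_antisymm (hc ▸ hg h.le) ha))

lemma ge_of_antitone_of_unique_zero {ι : Type*} [LinearOrder ι] {g : ι → ℝ} (hg : Antitone g)
    {b c : ι} (hb : g b ≤ 0) (hc : g c = 0) (huniq : ∀ x, g x = 0 → x = c) : c ≤ b := by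
  by_contra! h
  exact h.ne (huniq b (le_antisymm hb (hc ▸ hg h.le)))

theorem stmt_3_general {Ω 𝒳 : Type*} [MeasurableSpace Ω]
    (P : Measure Ω) [IsProbabilityMeasure P]
    (X : Ω → 𝒳)
    (f : 𝒳 → ℝ)
    (hfL2 : MemLp (fun ω => f (X ω)) 2 P)
    (v : ℝ) (hv : variance (fun ω => f (X ω)) P ≤ v)
    (α : ℝ) (hα : 0 < α) (hαv : α ^ 2 * v ≤ 1)
    (μbar : ℝ) (hroot : rbar P α X f μbar = 0)
    (huniq : ∀ μ, rbar P α X f μ = 0 → μ = μbar) :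
    (∫ ω, f (X ω) ∂P) - α * v ≤ μbar ∧ μbar ≤ (∫ ω, f (X ω) ∂P) + α * v := by
  set m := ∫ ω, f (X ω) ∂P
  have hv0 : 0 ≤ v := (variance_nonneg _ _).trans hv
  have herr : α * (Var[fun ω => f (X ω); P] + (α * v) ^ 2) / 2 ≤ α * v := by
    have : α ^ 2 * v * v ≤ v := by nlinarith
    nlinarith
  have hmid := abs_rbar_sub_le hfL2 hα
  constructor
  · refine le_of_antitone_of_unique_zero (rbar_antitone hfL2 hα) ?_ hroot huniq
    have := (abs_le.1 (hmid (m - α * v))).1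
    rw [sub_sub_cancel] at this
    linarith
  · refine ge_of_antitone_of_unique_zero (rbar_antitone hfL2 hα) ?_ hroot huniq
    have := (abs_le.1 (hmid (m + α * v))).2
    rw [sub_add_cancel_left, neg_sq] at this
    linarith

/-- Lemma 3.1 (second part): the unique zero `μ̄_f` of `r̄_f` lies within `α v` of `m_f`. -/
theorem stmt_3 {Ω 𝒳 : Type*} [MeasurableSpace Ω] [MeasurableSpace 𝒳]
    (P : Measure Ω) [IsProbabilityMeasure P]
    (X : Ω → 𝒳) (hX : Measurable X)
    (f : 𝒳 → ℝ) (hfm : Measurable f) (hf0 : ∀ x, 0 ≤ f x)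
    (hfL2 : MemLp (fun ω => f (X ω)) 2 P)
    (v : ℝ) (hv : variance (fun ω => f (X ω)) P ≤ v)
    (α : ℝ) (hα : 0 < α) (hαv : α ^ 2 * v ≤ 1)
    (μbar : ℝ) (hroot : rbar P α X f μbar = 0)
    (huniq : ∀ μ, rbar P α X f μ = 0 → μ = μbar) :
    (∫ ω, f (X ω) ∂P) - α * v ≤ μbar ∧ μbar ≤ (∫ ω, f (X ω) ∂P) + α * v :=
  stmt_3_general P X f hfL2 v hv α hα hαv μbar hroot huniq
end
end

section
/- Let X be a random vector in ℝ^m with E‖X − EX‖² ≤ V < ∞, and let y_1, …, y_k ∈ ℝ^m. Then Var(min_{j=1,…,k} ‖X − y_j‖) ≤ k V. -/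
open MeasureTheory ProbabilityTheory

/-! The distance to the nearest of the points `y j` is a 1-Lipschitz function of `X`, and the
variance of a 1-Lipschitz function of `X` is at most its mean squared deviation from its value
at `E X`. So the variance is even at most `E‖X - E X‖² ≤ V ≤ k V`. -/

theorem lipschitzWith_one_iInf_dist {α ι : Type*} [PseudoMetricSpace α] [Nonempty ι]
    (y : ι → α) : LipschitzWith 1 fun x => ⨅ j, dist x (y j) :=
  LipschitzWith.of_le_add fun x x' => sub_le_iff_le_add.mp <| le_ciInf fun j =>
    sub_le_iff_le_add'.mpr <| (ciInf_le ⟨0, by rintro _ ⟨i, rfl⟩; positivity⟩ j).trans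
      (dist_triangle x x' (y j))

theorem variance_comp_le_of_lipschitzWith {Ω E : Type*} [MeasurableSpace Ω] {μ : Measure Ω}
    [IsProbabilityMeasure μ] [PseudoMetricSpace E] {X : Ω → E} (hX : AEStronglyMeasurable X μ)
    {K : NNReal} {f : E → ℝ} (hf : LipschitzWith K f) (a : E)
    (hXa : Integrable (fun ω => dist (X ω) a ^ 2) μ) :
    variance (fun ω => f (X ω)) μ ≤ K ^ 2 * ∫ ω, dist (X ω) a ^ 2 ∂μ := by
  have hfX : AEStronglyMeasurable (fun ω => f (X ω)) μ :=
    hf.continuous.comp_aestronglyMeasurable hX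
  calc variance (fun ω => f (X ω)) μ = variance (fun ω => f (X ω) - f a) μ :=
        (variance_sub_const hfX _).symm
    _ ≤ ∫ ω, (f (X ω) - f a) ^ 2 ∂μ :=
        variance_le_expectation_sq (hfX.sub aestronglyMeasurable_const)
    _ ≤ ∫ ω, K ^ 2 * dist (X ω) a ^ 2 ∂μ := by
        refine integral_mono_of_nonneg (.of_forall fun ω => sq_nonneg _)
          (hXa.const_mul _) (.of_forall fun ω => ?_)
        dsimp only
        rw [← mul_pow, ← sq_abs, ← Real.dist_eq]
        exact pow_le_pow_left₀ dist_nonneg (hf.dist_le_mul _ _) 2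
    _ = K ^ 2 * ∫ ω, dist (X ω) a ^ 2 ∂μ := integral_const_mul _ _

theorem stmt_17_general {Ω : Type*} [MeasurableSpace Ω] (P : Measure Ω) [IsProbabilityMeasure P]
    {m k : ℕ} (hk : 0 < k)
    (X : Ω → EuclideanSpace ℝ (Fin m)) (hX2 : MemLp X 2 P)
    (V : ℝ) (hV : ∫ ω, ‖X ω - ∫ ω', X ω' ∂P‖ ^ 2 ∂P ≤ V)
    (y : Fin k → EuclideanSpace ℝ (Fin m)) :
    variance (fun ω => ⨅ j, ‖X ω - y j‖) P ≤ k * V := by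
  have : Nonempty (Fin k) := Fin.pos_iff_nonempty.mp hk
  have hvar :
      variance (fun ω => ⨅ j, ‖X ω - y j‖) P ≤ ∫ ω, ‖X ω - ∫ ω', X ω' ∂P‖ ^ 2 ∂P := by
    simpa only [dist_eq_norm, NNReal.coe_one, one_pow, one_mul] using
      variance_comp_le_of_lipschitzWith hX2.aestronglyMeasurable
        (lipschitzWith_one_iInf_dist y) (∫ ω', X ω' ∂P)
        (by simpa only [dist_eq_norm, Pi.sub_apply] using
          (hX2.sub (memLp_const _)).norm.integrable_sq)
  have hV0 : 0 ≤ V := (integral_nonneg fun _ => sq_nonneg _).trans hV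
  calc variance (fun ω => ⨅ j, ‖X ω - y j‖) P ≤ V := hvar.trans hV
    _ ≤ k * V := le_mul_of_one_le_left hV0 (by exact_mod_cast hk)

/-- The variance bound for `k`-means: `Var(min_{j≤k} ‖X - y_j‖) ≤ k V` whenever
`E‖X - EX‖² ≤ V`. -/
theorem stmt_17 {Ω : Type*} [MeasurableSpace Ω] (P : Measure Ω) [IsProbabilityMeasure P]
    {m k : ℕ} (hk : 0 < k)
    (X : Ω → EuclideanSpace ℝ (Fin m)) (hXm : Measurable X) (hX2 : MemLp X 2 P)
    (V : ℝ) (hV : ∫ ω, ‖X ω - ∫ ω', X ω' ∂P‖ ^ 2 ∂P ≤ V)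
    (y : Fin k → EuclideanSpace ℝ (Fin m)) :
    variance (fun ω => ⨅ j, ‖X ω - y j‖) P ≤ k * V :=
  stmt_17_general P hk X hX2 V hV y
end
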